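/- arXiv:1409.6906 — 3 statements merged into one kernel-verified Lean document; each statement's English description precedes it below -/
import Mathlib

section
/- Every complex 2-dimensional linear subspace of ℂⁿ (n ≥ 3) intersects the set of nonzero null vectors 𝔄 \ {0}; consequently, the Levi form of a C² null plurisubharmonic function has at most one negative eigenvalue at each point. -/
def IsNullVec {n : ℕ} (θ : Fin n → ℂ) : Prop := ∑ i, θ i ^ 2 = 0

lemma aux_null {n : ℕ} (v w : Fin n → ℂ) (h : LinearIndependent ℂ ![v, w]) :
    ∃ z : Fin n → ℂ, z ≠ 0 ∧ z ∈ Submodule.span ℂ {v, w} ∧ IsNullVec z := by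
  rw [LinearIndependent.pair_iff] at h
  set A : ℂ := ∑ i, v i ^ 2 with hA
  set B : ℂ := ∑ i, v i * w i with hB
  set C : ℂ := ∑ i, w i ^ 2 with hC
  by_cases hA0 : A = 0
  · refine ⟨v, ?_, Submodule.subset_span (Set.mem_insert _ _), hA0⟩
    intro hv
    have := h 1 0 (by simp [hv])
    simp at this
  · obtain ⟨s, hs⟩ := IsAlgClosed.exists_pow_nat_eq (B ^ 2 - A * C) (n := 2) (by norm_num)
    set α : ℂ := (-B + s) / A with hα
    have hq : A * α ^ 2 + 2 * B * α + C = 0 := by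
      rw [hα]
      field_simp
      ring_nf
      linear_combination hs
    refine ⟨α • v + w, ?_, ?_, ?_⟩
    · intro hz
      have := (h α 1 (by simpa using hz)).2
      norm_num at this
    · exact Submodule.add_mem _
        (Submodule.smul_mem _ _ (Submodule.subset_span (Set.mem_insert _ _)))
        (Submodule.subset_span (Set.mem_insert_of_mem _ rfl))
    · show ∑ i, ((α • v + w) i) ^ 2 = 0
      have : ∑ i, ((α • v + w) i) ^ 2 = α ^ 2 * A + 2 * α * B + C := by
        simp only [Pi.add_apply, Pi.smul_apply, smul_eq_mul, hA, hB, hC,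
          Finset.mul_sum, ← Finset.sum_add_distrib]
        exact Finset.sum_congr rfl fun i _ => by ring
      rw [this]; linear_combination hq

/-- Every complex 2-dimensional linear subspace of ℂⁿ (n ≥ 3) contains a nonzero null
vector; consequently, a quadratic (Levi-type) form `Λ` that is nonnegative on all null
vectors cannot be negative definite on any 2-dimensional subspace, i.e. the Levi form of a
C² null plurisubharmonic function has at most one negative eigenvalue at each point. -/
theorem stmt_5 {n : ℕ} (hn : 3 ≤ n) :
    (∀ v w : Fin n → ℂ, LinearIndependent ℂ ![v, w] →
      ∃ z : Fin n → ℂ, z ≠ 0 ∧ z ∈ Submodule.span ℂ {v, w} ∧ IsNullVec z) ∧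
    (∀ Λ : (Fin n → ℂ) → ℝ,
      (∀ θ : Fin n → ℂ, θ ≠ 0 → IsNullVec θ → 0 ≤ Λ θ) →
      ∀ v w : Fin n → ℂ, LinearIndependent ℂ ![v, w] →
        ¬ (∀ z : Fin n → ℂ, z ≠ 0 → z ∈ Submodule.span ℂ {v, w} → Λ z < 0)) := by
  refine ⟨fun v w h => aux_null v w h, fun Λ hΛ v w h hneg => ?_⟩
  obtain ⟨z, hz0, hzs, hzn⟩ := aux_null v w h
  exact absurd (hΛ z hz0 hzn) (not_le.2 (hneg z hz0 hzs))
end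

section
/- For ν± = (1/√2)(1, ±i, 0) and e₃ = (0,0,1), which form a unitary basis of ℂ³ with ν± null vectors, the function u(z₁ν₊ + z₂ν₋ + z₃e₃) = ε|z₁|² + b|z₂|² - |z₃|² is strictly positive on the set of unit null vectors of ℂ³ provided ε > 0 is small enough and b > 0 is large enough. -/
lemma par_law (u v : ℂ) :
    Complex.normSq (u + v) + Complex.normSq (u - v) =
      2 * (Complex.normSq u + Complex.normSq v) := by
  simp [Complex.normSq_apply, Complex.add_re, Complex.add_im, Complex.sub_re, Complex.sub_im]
  ring

/-- For `ν± = (1/√2)(1, ±i, 0)` and `e₃ = (0,0,1)`, the function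
`u(z₁ν₊ + z₂ν₋ + z₃e₃) = ε|z₁|² + b|z₂|² − |z₃|²` is strictly positive on the set of unit
null vectors of ℂ³, provided `ε > 0` is small enough and `b > 0` is large enough. -/
theorem stmt_9 :
    ∃ ε₀ : ℝ, 0 < ε₀ ∧ ∀ ε : ℝ, 0 < ε → ε ≤ ε₀ →
      ∃ b₀ : ℝ, 0 < b₀ ∧ ∀ b : ℝ, b₀ ≤ b →
        ∀ z₁ z₂ z₃ : ℂ,
          (let νp : Fin 3 → ℂ := (Real.sqrt 2)⁻¹ • ![1, Complex.I, 0]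
           let νm : Fin 3 → ℂ := (Real.sqrt 2)⁻¹ • ![1, -Complex.I, 0]
           let e₃ : Fin 3 → ℂ := ![0, 0, 1]
           let w : Fin 3 → ℂ := z₁ • νp + z₂ • νm + z₃ • e₃
           (∑ i, w i ^ 2 = 0) ∧ (∑ i, ‖w i‖ ^ 2 = 1)) →
          0 < ε * ‖z₁‖ ^ 2 + b * ‖z₂‖ ^ 2 - ‖z₃‖ ^ 2 := by
  refine ⟨1, one_pos, fun ε hε hε1 => ⟨ε⁻¹ + 1, by positivity, fun b hb z₁ z₂ z₃ h => ?_⟩⟩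
  obtain ⟨h1, h2⟩ := h
  simp only [Fin.sum_univ_three, Pi.add_apply, Pi.smul_apply, Matrix.cons_val_zero,
    Matrix.cons_val_one, Matrix.head_cons, Matrix.cons_val_two, Matrix.tail_cons,
    smul_eq_mul, Complex.real_smul, mul_one, mul_zero, add_zero, zero_add] at h1 h2
  have hr2 : (((Real.sqrt 2)⁻¹ : ℝ) : ℂ) ^ 2 = 2⁻¹ := by
    rw [← Complex.ofReal_pow, inv_pow, Real.sq_sqrt (by norm_num : (0:ℝ) ≤ 2)]
    norm_num
  -- null condition
  have h1' : z₃ ^ 2 = -(2 * z₁ * z₂) := by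
    linear_combination h1 - 4 * z₁ * z₂ * hr2 - ((((Real.sqrt 2)⁻¹ : ℝ) : ℂ) ^ 2 * (z₁ - z₂) ^ 2) * Complex.I_sq
  have hC : ‖z₃‖ ^ 2 = 2 * ‖z₁‖ * ‖z₂‖ := by
    have := congrArg (‖·‖) h1'
    rw [norm_pow, norm_neg, norm_mul, norm_mul] at this
    simpa using this
  -- norm condition
  have e1 : z₁ * (((Real.sqrt 2)⁻¹ : ℝ) : ℂ) + z₂ * (((Real.sqrt 2)⁻¹ : ℝ) : ℂ) =
      (((Real.sqrt 2)⁻¹ : ℝ) : ℂ) * (z₁ + z₂) := by ring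
  have e2 : z₁ * ((((Real.sqrt 2)⁻¹ : ℝ) : ℂ) * Complex.I) +
      z₂ * ((((Real.sqrt 2)⁻¹ : ℝ) : ℂ) * -Complex.I) =
      (((Real.sqrt 2)⁻¹ : ℝ) : ℂ) * Complex.I * (z₁ - z₂) := by ring
  rw [e1, e2] at h2
  have hA : ‖z₁‖ ^ 2 + ‖z₂‖ ^ 2 + ‖z₃‖ ^ 2 = 1 := by
    simp only [Complex.sq_norm] at h2 ⊢
    simp only [map_mul, Complex.normSq_I, mul_one, Complex.normSq_ofReal] at h2
    have hrr : ((Real.sqrt 2)⁻¹ : ℝ) * ((Real.sqrt 2)⁻¹ : ℝ) = 2⁻¹ := by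
      rw [← Real.sqrt_inv]
      exact Real.mul_self_sqrt (by norm_num)
    rw [hrr] at h2
    have hp := par_law z₁ z₂
    linarith
  set a := ‖z₁‖ with ha
  set t := ‖z₂‖ with htdef
  have ha0 : 0 ≤ a := norm_nonneg z₁
  have ht0 : 0 ≤ t := norm_nonneg z₂
  have hεb : 1 + ε ≤ ε * b := by
    have := mul_le_mul_of_nonneg_left hb hε.le
    rw [mul_add, mul_inv_cancel₀ hε.ne', mul_one] at this
    linarith
  rcases eq_or_lt_of_le ht0 with ht | ht
  · have hc0 : ‖z₃‖ ^ 2 = 0 := by rw [hC, ← ht]; ring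
    have ha1 : a ^ 2 = 1 := by
      rw [hc0, ← ht] at hA; linarith
    rw [ha1, hc0, ← ht]
    nlinarith [hε]
  · nlinarith [sq_nonneg (ε * a - t), mul_pos (mul_pos hε ht) ht, hC, hA, hεb]
end

section
/- If u is an upper semicontinuous function on a domain ω ⊂ ℝⁿ whose restriction to every affine 2-plane (in isothermal coordinates) is subharmonic, then the function U(x + iy) = u(x) on the tube ω × iℝⁿ ⊂ ℂⁿ is null plurisubharmonic; conversely, if U is null plurisubharmonic on the tube and independent of the imaginary part, then u(x) = U(x) is minimal plurisubharmonic on ω. -/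
open MeasureTheory Metric

/-- Subharmonicity on a subset of ℂ: upper semicontinuity plus the submean value inequality. -/
def SubharmonicOn (v : ℂ → ℝ) (s : Set ℂ) : Prop :=
  UpperSemicontinuousOn v s ∧
    ∀ a : ℂ, ∀ r : ℝ, 0 < r → closedBall a r ⊆ s →
      v a ≤ (2 * Real.pi)⁻¹ *
        ∫ t in (0:ℝ)..(2 * Real.pi), v (a + (r : ℂ) * Complex.exp (t * Complex.I))

/-- Null plurisubharmonicity on `Ω ⊆ ℂⁿ`. -/
def NullPshOn {n : ℕ} (u : (Fin n → ℂ) → ℝ) (Ω : Set (Fin n → ℂ)) : Prop :=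
  UpperSemicontinuousOn u Ω ∧
    ∀ a θ : Fin n → ℂ, θ ≠ 0 → IsNullVec θ →
      SubharmonicOn (fun ζ : ℂ => u (a + ζ • θ)) {ζ : ℂ | a + ζ • θ ∈ Ω}

/-- Minimal plurisubharmonicity on `ω ⊆ ℝⁿ`: upper semicontinuity plus subharmonicity of
the restriction to every affine 2-plane in isothermal coordinates, i.e. parametrized by
`ζ ↦ a + (Re ζ)·v + (Im ζ)·w` with `v ⊥ w` and `|v| = |w|`, `v ≠ 0`. -/
def MinPshOn {n : ℕ} (u : (Fin n → ℝ) → ℝ) (ω : Set (Fin n → ℝ)) : Prop :=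
  UpperSemicontinuousOn u ω ∧
    ∀ a v w : Fin n → ℝ, v ≠ 0 → (∑ i, v i * w i) = 0 → (∑ i, v i ^ 2) = (∑ i, w i ^ 2) →
      SubharmonicOn (fun ζ : ℂ => u (a + ζ.re • v + ζ.im • w))
        {ζ : ℂ | a + ζ.re • v + ζ.im • w ∈ ω}

lemma usc_comp {α β : Type*} [TopologicalSpace α] [TopologicalSpace β]
    {g : α → β} {s : Set α} {t : Set β} {u : β → ℝ}
    (hg : Continuous g) (hst : Set.MapsTo g s t)
    (hu : UpperSemicontinuousOn u t) :
    UpperSemicontinuousOn (fun x => u (g x)) s := by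
  intro x hx y hy
  exact (hg.continuousAt.continuousWithinAt.tendsto_nhdsWithin hst).eventually
    (hu (g x) (hst hx) y hy)

lemma subh_congr {f g : ℂ → ℝ} {s t : Set ℂ} (h : SubharmonicOn f s)
    (hfg : f = g) (hst : s = t) : SubharmonicOn g t := hfg ▸ hst ▸ h

lemma null_parts {n : ℕ} {θ : Fin n → ℂ} (h : ∑ i, θ i ^ 2 = 0) :
    ∑ i, (θ i).re ^ 2 = ∑ i, (θ i).im ^ 2 ∧ ∑ i, (θ i).re * (θ i).im = 0 := by
  rw [Complex.ext_iff] at h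
  obtain ⟨h1, h2⟩ := h
  simp only [Complex.re_sum, Complex.im_sum, pow_two, Complex.mul_re, Complex.mul_im,
    Complex.zero_re, Complex.zero_im, Finset.sum_sub_distrib] at h1 h2
  constructor
  · have := sub_eq_zero.mp h1
    simpa [pow_two] using this
  · have : ∑ i, (2 * ((θ i).re * (θ i).im)) = 0 := by
      rw [← h2]; congr 1; funext i; ring
    rw [← Finset.mul_sum] at this
    linarith [this]


/-- A minimal plurisubharmonic function `u` on `ω ⊆ ℝⁿ` lifts to the null plurisubharmonic
function `U(x+iy) = u(x)` on the tube `ω × iℝⁿ`; conversely a null plurisubharmonic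
function on the tube which is independent of the imaginary part restricts to a minimal
plurisubharmonic function on `ω`. -/
theorem stmt_11 {n : ℕ} (hn : 3 ≤ n) (ω : Set (Fin n → ℝ)) :
    (∀ u : (Fin n → ℝ) → ℝ, MinPshOn u ω →
      NullPshOn (fun z : Fin n → ℂ => u (fun i => (z i).re))
        {z : Fin n → ℂ | (fun i => (z i).re) ∈ ω}) ∧
    (∀ U : (Fin n → ℂ) → ℝ,
      NullPshOn U {z : Fin n → ℂ | (fun i => (z i).re) ∈ ω} →
      (∀ z w : Fin n → ℂ, (∀ i, (z i).re = (w i).re) → U z = U w) →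
      MinPshOn (fun x : Fin n → ℝ => U (fun i => (x i : ℂ))) ω) := by
  have hgc : Continuous fun z : Fin n → ℂ => (fun i => (z i).re) :=
    continuous_pi fun i => Complex.continuous_re.comp (continuous_apply i)
  constructor
  · rintro u ⟨husc, hsub⟩
    refine ⟨usc_comp hgc (fun z hz => hz) husc, ?_⟩
    intro a θ hθ hnull
    obtain ⟨hre, him⟩ := null_parts hnull
    set v : Fin n → ℝ := fun i => (θ i).re with hv
    set w : Fin n → ℝ := fun i => (θ i).im with hw
    have hv0 : v ≠ 0 := by
      intro h0
      apply hθ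
      have hz : ∀ i, (θ i).re = 0 := fun i => congrFun h0 i
      have hw2 : ∑ i, w i ^ 2 = 0 := by
        rw [hw, ← hre]
        exact Finset.sum_eq_zero fun i _ => by rw [hz i]; ring
      have hwz : ∀ i ∈ Finset.univ, w i ^ 2 = 0 :=
        (Finset.sum_eq_zero_iff_of_nonneg (fun i _ => sq_nonneg _)).mp hw2
      funext i
      have h1 : v i = 0 := by rw [h0]; rfl
      have h2 : w i = 0 := by
        have := hwz i (Finset.mem_univ i)
        exact pow_eq_zero_iff (by norm_num) |>.mp this
      exact Complex.ext h1 h2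
    have hp : ∀ ζ : ℂ, ((fun i => (a i).re) + ζ.re • v + ζ.im • (-w))
        = fun i => ((a + ζ • θ) i).re := by
      intro ζ
      funext i
      simp only [Pi.add_apply, Pi.smul_apply, Pi.neg_apply, smul_eq_mul,
        Complex.add_re, Complex.mul_re, hv, hw]
      ring
    have hperp' : ∑ i, v i * (-w) i = 0 := by
      have h1 : ∀ i ∈ Finset.univ, v i * (-w) i = -((θ i).re * (θ i).im) := fun i _ => by
        simp [hv, hw]
      rw [Finset.sum_congr rfl h1, Finset.sum_neg_distrib, him, neg_zero]
    have hnorm' : ∑ i, v i ^ 2 = ∑ i, (-w) i ^ 2 := by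
      have h1 : ∀ i ∈ Finset.univ, v i ^ 2 = (θ i).re ^ 2 := fun i _ => by simp [hv]
      have h2 : ∀ i ∈ Finset.univ, (-w) i ^ 2 = (θ i).im ^ 2 := fun i _ => by simp [hw]
      rw [Finset.sum_congr rfl h1, Finset.sum_congr rfl h2]
      exact hre
    have key := hsub (fun i => (a i).re) v (-w) hv0 hperp' hnorm' 
    refine subh_congr key ?_ ?_
    · funext ζ
      exact congrArg u (congrArg (fun x => fun i => x i) (hp ζ)) |>.trans rfl
    · ext ζ
      simp only [Set.mem_setOf_eq]
      rw [hp ζ]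
  · rintro U ⟨husc, hsub⟩ hind
    have hgr : Continuous fun x : Fin n → ℝ => (fun i => (x i : ℂ)) :=
      continuous_pi fun i => Complex.continuous_ofReal.comp (continuous_apply i)
    refine ⟨usc_comp hgr (fun x hx => by simpa using hx) husc, ?_⟩
    intro a v w hv0 hperp hnorm
    set θ : Fin n → ℂ := fun i => (v i : ℂ) - Complex.I * w i with hθdef
    have hθ0 : θ ≠ 0 := by
      intro h0
      apply hv0
      funext i
      have : θ i = 0 := by rw [h0]; rfl
      have := congrArg Complex.re this
      simpa [hθdef] using this
    have hnull : IsNullVec θ := by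
      unfold IsNullVec
      have hcalc : ∀ i, θ i ^ 2 =
          ((v i ^ 2 : ℝ) : ℂ) - ((w i ^ 2 : ℝ) : ℂ) - 2 * Complex.I * ((v i * w i : ℝ) : ℂ) := by
        intro i
        simp only [hθdef]
        push_cast
        ring_nf
        rw [Complex.I_sq]
        ring
      rw [Finset.sum_congr rfl fun i _ => hcalc i]
      simp only [Finset.sum_sub_distrib, ← Finset.mul_sum, ← Complex.ofReal_sum]
      rw [← hnorm, hperp]
      simp
    have key := hsub (fun i => (a i : ℂ)) θ hθ0 hnull
    have hq : ∀ ζ : ℂ, (fun i => (((fun i => (a i : ℂ)) + ζ • θ) i).re)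
        = a + ζ.re • v + ζ.im • w := by
      intro ζ
      funext i
      simp only [Pi.add_apply, Pi.smul_apply, smul_eq_mul, Complex.add_re,
        Complex.mul_re, hθdef, Complex.sub_re, Complex.sub_im, Complex.ofReal_re,
        Complex.ofReal_im, Complex.mul_im, Complex.I_re, Complex.I_im]
      ring
    refine subh_congr key ?_ ?_
    · funext ζ
      apply hind
      intro i
      have := congrFun (hq ζ) i
      rw [this]
      simp
    · ext ζ
      simp only [Set.mem_setOf_eq]
      rw [hq ζ]
end
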